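/- Let A₁, …, A_m be positive semidefinite Hermitian n×n matrices forming a frame, with optimal upper frame bound B = sup_{w ∈ ℂ^{n×r}, w ≠ 0} (1/‖w‖₂²) Σ_{j=1}^m ⟨w w*, A_j⟩_ℝ. Define α_j(x) = ⟨x x*, A_j⟩_ℝ^{1/2} and θ(x) = (x x*)^{1/2}. Then the optimal squared global upper Lipschitz constant B₀ := sup { Σ_{j=1}^m (α_j(x) − α_j(y))² / ‖θ(x) − θ(y)‖₂² : x, y ∈ ℂ^{n×r}, θ(x) ≠ θ(y) } satisfies B₀ = B. -/

import Mathlib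

open Matrix Filter
open scoped ComplexOrder

/-- The old Mathlib `Matrix.PosSemidef.sqrt` (removed upstream), with its old definition. -/
noncomputable def Matrix.PosSemidef.sqrt {n 𝕜 : Type*} [Fintype n] [DecidableEq n] [RCLike 𝕜]
    {A : Matrix n n 𝕜} (hA : A.PosSemidef) : Matrix n n 𝕜 :=
  hA.1.eigenvectorUnitary.1 * diagonal ((↑) ∘ (√·) ∘ hA.1.eigenvalues) *
    (star hA.1.eigenvectorUnitary : Matrix n n 𝕜)

noncomputable def frob {p q : ℕ} (x : Matrix (Fin p) (Fin q) ℂ) : ℝ :=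
  Real.sqrt (Matrix.trace (xᴴ * x)).re

noncomputable def rinner {p q : ℕ} (X Y : Matrix (Fin p) (Fin q) ℂ) : ℝ :=
  (Matrix.trace (Xᴴ * Y)).re

noncomputable def nuclear {p q : ℕ} (x : Matrix (Fin p) (Fin q) ℂ) : ℝ :=
  (Matrix.trace (Matrix.posSemidef_conjTranspose_mul_self x).sqrt).re

noncomputable def theta {n r : ℕ} (x : Matrix (Fin n) (Fin r) ℂ) : Matrix (Fin n) (Fin n) ℂ :=
  (Matrix.posSemidef_self_mul_conjTranspose x).sqrt

noncomputable def psi {n r : ℕ} (x : Matrix (Fin n) (Fin r) ℂ) : Matrix (Fin n) (Fin n) ℂ :=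
  frob x • theta x

noncomputable def Dmet {n r : ℕ} (x y : Matrix (Fin n) (Fin r) ℂ) : ℝ :=
  ⨅ U : Matrix.unitaryGroup (Fin r) ℂ, frob (x - y * (U : Matrix (Fin r) (Fin r) ℂ))

noncomputable def dmet {n r : ℕ} (x y : Matrix (Fin n) (Fin r) ℂ) : ℝ :=
  ⨅ U : Matrix.unitaryGroup (Fin r) ℂ,
    frob (x - y * (U : Matrix (Fin r) (Fin r) ℂ)) * frob (x + y * (U : Matrix (Fin r) (Fin r) ℂ))


/-! With `A_j = S_j ^ 2` and `θ(x) θ(x)* = x x*`, one has `α_j(x) = ‖S_j θ(x)‖₂`, so the reverse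
triangle inequality gives `(α_j(x) - α_j(y))² ≤ ⟨Δ Δ*, A_j⟩` with `Δ = θ(x) - θ(y)`. Splitting the
`n × n` matrix `Δ` into its columns, each padded to an `n × r` matrix, shows that every upper frame
bound on `ℂ^{n×r}` also bounds `Σ_j ⟨Δ Δ*, A_j⟩ / ‖Δ‖₂²`; in particular the optimal one does.
Conversely, taking `y = 0` turns the Lipschitz quotient into the frame quotient of `x`. -/

attribute [local instance] Matrix.frobeniusNormedAddCommGroup

namespace Matrix.PosSemidef

variable {n 𝕜 : Type*} [Fintype n] [DecidableEq n] [RCLike 𝕜] {A : Matrix n n 𝕜}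

lemma posSemidef_sqrt (hA : A.PosSemidef) : hA.sqrt.PosSemidef :=
  PosSemidef.mul_mul_conjTranspose_same
    (posSemidef_diagonal_iff.mpr fun _ => RCLike.ofReal_nonneg.mpr (Real.sqrt_nonneg _)) _

lemma sqrt_mul_sqrt (hA : A.PosSemidef) : hA.sqrt * hA.sqrt = A := by
  change Unitary.conjStarAlgAut 𝕜 _ hA.1.eigenvectorUnitary _ *
    Unitary.conjStarAlgAut 𝕜 _ hA.1.eigenvectorUnitary _ = A
  rw [← map_mul, diagonal_mul_diagonal]
  conv_rhs => rw [hA.1.spectral_theorem]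
  congr 2
  funext i
  simp [← RCLike.ofReal_mul, Real.mul_self_sqrt (hA.eigenvalues_nonneg i)]

end Matrix.PosSemidef

section Frobenius

variable {p q : ℕ}

lemma re_trace_conjTranspose_mul_self (x : Matrix (Fin p) (Fin q) ℂ) :
    (xᴴ * x).trace.re = ∑ i, ∑ k, ‖x i k‖ ^ 2 := by
  simp [Matrix.trace, Matrix.mul_apply, Complex.re_sum, ← Complex.normSq_eq_norm_sq,
    Complex.normSq_apply, Finset.sum_comm (γ := Fin p)]

lemma frob_eq_norm (x : Matrix (Fin p) (Fin q) ℂ) : frob x = ‖x‖ := by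
  rw [frob, frobenius_norm_def, re_trace_conjTranspose_mul_self, Real.sqrt_eq_rpow]
  norm_cast

lemma frob_nonneg (x : Matrix (Fin p) (Fin q) ℂ) : 0 ≤ frob x := Real.sqrt_nonneg _

lemma frob_sq (x : Matrix (Fin p) (Fin q) ℂ) : frob x ^ 2 = (xᴴ * x).trace.re :=
  Real.sq_sqrt (by rw [re_trace_conjTranspose_mul_self]; positivity)

lemma frob_pos {x : Matrix (Fin p) (Fin q) ℂ} (hx : x ≠ 0) : 0 < frob x := by
  rw [frob_eq_norm]; exact norm_pos_iff.2 hx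

lemma rinner_mul_conjTranspose_self (x : Matrix (Fin p) (Fin q) ℂ)
    {M : Matrix (Fin p) (Fin p) ℂ} (hM : M.PosSemidef) :
    rinner (x * xᴴ) M = frob (hM.sqrt * x) ^ 2 := by
  have hsq : (hM.sqrt * x)ᴴ * (hM.sqrt * x) = xᴴ * M * x := by
    rw [conjTranspose_mul, hM.posSemidef_sqrt.1, Matrix.mul_assoc, ← Matrix.mul_assoc hM.sqrt,
      hM.sqrt_mul_sqrt, ← Matrix.mul_assoc]
  rw [frob_sq, rinner, hsq, (isHermitian_mul_conjTranspose_self x).eq,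
    trace_mul_comm (xᴴ * M), ← Matrix.mul_assoc]

lemma rinner_sum_left {ι : Type*} (s : Finset ι) (f : ι → Matrix (Fin p) (Fin q) ℂ)
    (M : Matrix (Fin p) (Fin q) ℂ) :
    rinner (∑ i ∈ s, f i) M = ∑ i ∈ s, rinner (f i) M := by
  simp only [rinner, conjTranspose_sum, Matrix.sum_mul, trace_sum, Complex.re_sum]

lemma rinner_zero_left (M : Matrix (Fin p) (Fin q) ℂ) : rinner 0 M = 0 := by
  simp [rinner]

end Frobenius

section Theta

variable {n r : ℕ}

lemma isHermitian_theta (x : Matrix (Fin n) (Fin r) ℂ) : (theta x).IsHermitian :=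
  (posSemidef_self_mul_conjTranspose x).posSemidef_sqrt.1

lemma theta_mul_conjTranspose_self (x : Matrix (Fin n) (Fin r) ℂ) :
    theta x * (theta x)ᴴ = x * xᴴ := by
  rw [(isHermitian_theta x).eq, theta, PosSemidef.sqrt_mul_sqrt]

lemma frob_theta (x : Matrix (Fin n) (Fin r) ℂ) : frob (theta x) = frob x := by
  rw [frob, frob, ← (isHermitian_theta x).eq, conjTranspose_conjTranspose,
    theta_mul_conjTranspose_self, trace_mul_comm]

lemma theta_eq_zero_iff {x : Matrix (Fin n) (Fin r) ℂ} : theta x = 0 ↔ x = 0 := by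
  rw [← norm_eq_zero, ← norm_eq_zero (a := x), ← frob_eq_norm, ← frob_eq_norm, frob_theta]

lemma sqrt_rinner_eq_frob_sqrt_mul_theta (x : Matrix (Fin n) (Fin r) ℂ)
    {M : Matrix (Fin n) (Fin n) ℂ} (hM : M.PosSemidef) :
    √(rinner (x * xᴴ) M) = frob (hM.sqrt * theta x) := by
  rw [← theta_mul_conjTranspose_self, rinner_mul_conjTranspose_self _ hM,
    Real.sqrt_sq (frob_nonneg _)]

lemma sq_sub_sqrt_rinner_le (x y : Matrix (Fin n) (Fin r) ℂ) {M : Matrix (Fin n) (Fin n) ℂ}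
    (hM : M.PosSemidef) :
    (√(rinner (x * xᴴ) M) - √(rinner (y * yᴴ) M)) ^ 2 ≤
      rinner ((theta x - theta y) * (theta x - theta y)ᴴ) M := by
  rw [sqrt_rinner_eq_frob_sqrt_mul_theta x hM, sqrt_rinner_eq_frob_sqrt_mul_theta y hM,
    rinner_mul_conjTranspose_self _ hM, Matrix.mul_sub, sq_le_sq, abs_of_nonneg (frob_nonneg _)]
  simpa only [frob_eq_norm] using abs_norm_sub_norm_le _ _

end Theta

section FrameBound

variable {ι : Type*} [Fintype ι] {n p r : ℕ}

def IsUpperFrameBound (A : ι → Matrix (Fin n) (Fin n) ℂ) (r : ℕ) (B : ℝ) : Prop :=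
  ∀ z : Matrix (Fin n) (Fin r) ℂ, ∑ j, rinner (z * zᴴ) (A j) ≤ B * frob z ^ 2

def placeCol (Δ : Matrix (Fin n) (Fin p) ℂ) (c : Fin p) (k : Fin r) :
    Matrix (Fin n) (Fin r) ℂ :=
  of fun i k' => if k' = k then Δ i c else 0

lemma mul_conjTranspose_self_eq_sum_placeCol (Δ : Matrix (Fin n) (Fin p) ℂ) (k : Fin r) :
    Δ * Δᴴ = ∑ c, placeCol Δ c k * (placeCol Δ c k)ᴴ := by
  ext i i'
  simp [placeCol, mul_apply, Matrix.sum_apply, apply_ite (star : ℂ → ℂ), ite_mul,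
    Finset.sum_ite_eq']

lemma frob_sq_eq_sum_placeCol (Δ : Matrix (Fin n) (Fin p) ℂ) (k : Fin r) :
    frob Δ ^ 2 = ∑ c, frob (placeCol Δ c k) ^ 2 := by
  simp only [frob_sq, re_trace_conjTranspose_mul_self, placeCol]
  simp [apply_ite (‖·‖), Finset.sum_comm (γ := Fin n)]

lemma IsUpperFrameBound.of_cols {A : ι → Matrix (Fin n) (Fin n) ℂ} {B : ℝ}
    (hB : IsUpperFrameBound A r B) (k : Fin r) : IsUpperFrameBound A p B := fun Δ =>
  calc ∑ j, rinner (Δ * Δᴴ) (A j)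
      = ∑ c, ∑ j, rinner (placeCol Δ c k * (placeCol Δ c k)ᴴ) (A j) := by
        simp_rw [mul_conjTranspose_self_eq_sum_placeCol Δ k, rinner_sum_left]
        exact Finset.sum_comm
    _ ≤ ∑ c, B * frob (placeCol Δ c k) ^ 2 := Finset.sum_le_sum fun c _ => hB _
    _ = B * frob Δ ^ 2 := by rw [← Finset.mul_sum, frob_sq_eq_sum_placeCol Δ k]

end FrameBound

section Quotients

variable {ι : Type*} [Fintype ι] {n r : ℕ}

noncomputable def frameQuotient (A : ι → Matrix (Fin n) (Fin n) ℂ)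
    (w : Matrix (Fin n) (Fin r) ℂ) : ℝ :=
  (∑ j, rinner (w * wᴴ) (A j)) / frob w ^ 2

noncomputable def lipQuotient (A : ι → Matrix (Fin n) (Fin n) ℂ)
    (x y : Matrix (Fin n) (Fin r) ℂ) : ℝ :=
  (∑ j, (√(rinner (x * xᴴ) (A j)) - √(rinner (y * yᴴ) (A j))) ^ 2) /
    frob (theta x - theta y) ^ 2

def frameQuotients (A : ι → Matrix (Fin n) (Fin n) ℂ) (r : ℕ) : Set ℝ :=
  {t | ∃ w : Matrix (Fin n) (Fin r) ℂ, w ≠ 0 ∧ t = frameQuotient A w}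

def lipQuotients (A : ι → Matrix (Fin n) (Fin n) ℂ) (r : ℕ) : Set ℝ :=
  {t | ∃ x y : Matrix (Fin n) (Fin r) ℂ, theta x ≠ theta y ∧ t = lipQuotient A x y}

variable {A : ι → Matrix (Fin n) (Fin n) ℂ} {B : ℝ}

lemma lipQuotient_zero_right (hA : ∀ j, (A j).PosSemidef) (w : Matrix (Fin n) (Fin r) ℂ) :
    lipQuotient A w 0 = frameQuotient A w := by
  have hnonneg j : 0 ≤ rinner (w * wᴴ) (A j) := by
    rw [rinner_mul_conjTranspose_self w (hA j)]; positivity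
  simp [lipQuotient, frameQuotient, theta_eq_zero_iff.2, frob_theta, rinner_zero_left,
    Real.sq_sqrt (hnonneg _)]

lemma lipQuotient_le (hA : ∀ j, (A j).PosSemidef) (hB : IsUpperFrameBound A r B)
    {x y : Matrix (Fin n) (Fin r) ℂ} (hxy : theta x ≠ theta y) : lipQuotient A x y ≤ B := by
  obtain ⟨k⟩ : Nonempty (Fin r) := by
    by_contra! h
    exact hxy (congrArg theta (Subsingleton.elim x y))
  rw [lipQuotient, div_le_iff₀ (pow_pos (frob_pos (sub_ne_zero.2 hxy)) 2)]
  calc _ ≤ ∑ j, rinner ((theta x - theta y) * (theta x - theta y)ᴴ) (A j) :=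
        Finset.sum_le_sum fun j _ => sq_sub_sqrt_rinner_le x y (hA j)
    _ ≤ B * frob (theta x - theta y) ^ 2 := hB.of_cols k _

lemma frameQuotient_le (hB : IsUpperFrameBound A r B) {w : Matrix (Fin n) (Fin r) ℂ}
    (hw : w ≠ 0) : frameQuotient A w ≤ B :=
  (div_le_iff₀ (pow_pos (frob_pos hw) 2)).2 (hB w)

lemma isUpperFrameBound_sSup_frameQuotients (hB : IsUpperFrameBound A r B) :
    IsUpperFrameBound A r (sSup (frameQuotients A r)) := by
  have hbdd : BddAbove (frameQuotients A r) :=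
    ⟨B, by rintro _ ⟨v, hv, rfl⟩; exact frameQuotient_le hB hv⟩
  intro w
  rcases eq_or_ne w 0 with rfl | hw
  · simp [rinner_zero_left, frob_eq_norm]
  have hle : frameQuotient A w ≤ sSup (frameQuotients A r) := le_csSup hbdd ⟨w, hw, rfl⟩
  rwa [frameQuotient, div_le_iff₀ (pow_pos (frob_pos hw) 2)] at hle

lemma frameQuotients_subset_lipQuotients (hA : ∀ j, (A j).PosSemidef) :
    frameQuotients A r ⊆ lipQuotients A r := by
  rintro t ⟨w, hw, rfl⟩
  refine ⟨w, 0, ?_, (lipQuotient_zero_right hA w).symm⟩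
  rwa [theta_eq_zero_iff.2 rfl, Ne, theta_eq_zero_iff]

lemma Set.Nonempty.frameQuotients (h : (lipQuotients A r).Nonempty) :
    (frameQuotients A r).Nonempty := by
  obtain ⟨_, x, y, hxy, -⟩ := h
  by_cases hx : x = 0
  · refine ⟨_, y, fun hy => hxy ?_, rfl⟩
    rw [hx, hy]
  · exact ⟨_, x, hx, rfl⟩

theorem sSup_lipQuotients_eq (hA : ∀ j, (A j).PosSemidef) (hB : IsUpperFrameBound A r B) :
    sSup (lipQuotients A r) = sSup (frameQuotients A r) := by
  have hsub := frameQuotients_subset_lipQuotients (r := r) hA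
  have hle : ∀ t ∈ lipQuotients A r, t ≤ sSup (frameQuotients A r) := by
    rintro t ⟨x, y, hxy, rfl⟩
    exact lipQuotient_le hA (isUpperFrameBound_sSup_frameQuotients hB) hxy
  obtain hL | hL := (lipQuotients A r).eq_empty_or_nonempty
  · rw [hL, Set.subset_empty_iff.1 (hsub.trans hL.subset)]
  exact le_antisymm (csSup_le hL hle) (csSup_le_csSup ⟨_, hle⟩ hL.frameQuotients hsub)

end Quotients

theorem alpha_upper_lipschitz_eq_frame_bound_general (n r m : ℕ)
    (A : Fin m → Matrix (Fin n) (Fin n) ℂ) (hA : ∀ j, (A j).PosSemidef)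
    (B : ℝ)
    (hframe : ∃ a : ℝ, 0 < a ∧ a ≤ B ∧ ∀ z : Matrix (Fin n) (Fin r) ℂ,
      a * frob z ^ 2 ≤ ∑ j, rinner (z * zᴴ) (A j) ∧
      ∑ j, rinner (z * zᴴ) (A j) ≤ B * frob z ^ 2)
    (hB : B = sSup {t : ℝ | ∃ w : Matrix (Fin n) (Fin r) ℂ, w ≠ 0 ∧
      t = (∑ j, rinner (w * wᴴ) (A j)) / frob w ^ 2}) :
    sSup {t : ℝ | ∃ x y : Matrix (Fin n) (Fin r) ℂ, theta x ≠ theta y ∧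
      t = (∑ j, (Real.sqrt (rinner (x * xᴴ) (A j))
            - Real.sqrt (rinner (y * yᴴ) (A j))) ^ 2)
          / frob (theta x - theta y) ^ 2} = B := by
  obtain ⟨_, -, -, hbounds⟩ := hframe
  rw [hB]
  exact sSup_lipQuotients_eq hA fun z => (hbounds z).2

/-- for a frame of positive semidefinite matrices `A_j` with optimal upper
frame bound `B`, the squared global upper Lipschitz constant `B₀` of the `α` analysis map
`α_j(x) = ⟨x x*, A_j⟩_ℝ^{1/2}` relative to `‖θ(x) − θ(y)‖₂` equals `B`. -/
theorem alpha_upper_lipschitz_eq_frame_bound (n r m : ℕ) (hr : 1 ≤ r) (hrn : r ≤ n)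
    (A : Fin m → Matrix (Fin n) (Fin n) ℂ) (hA : ∀ j, (A j).PosSemidef)
    (B : ℝ)
    (hframe : ∃ a : ℝ, 0 < a ∧ a ≤ B ∧ ∀ z : Matrix (Fin n) (Fin r) ℂ,
      a * frob z ^ 2 ≤ ∑ j, rinner (z * zᴴ) (A j) ∧
      ∑ j, rinner (z * zᴴ) (A j) ≤ B * frob z ^ 2)
    (hB : B = sSup {t : ℝ | ∃ w : Matrix (Fin n) (Fin r) ℂ, w ≠ 0 ∧
      t = (∑ j, rinner (w * wᴴ) (A j)) / frob w ^ 2}) :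
    sSup {t : ℝ | ∃ x y : Matrix (Fin n) (Fin r) ℂ, theta x ≠ theta y ∧
      t = (∑ j, (Real.sqrt (rinner (x * xᴴ) (A j))
            - Real.sqrt (rinner (y * yᴴ) (A j))) ^ 2)
          / frob (theta x - theta y) ^ 2} = B :=
  alpha_upper_lipschitz_eq_frame_bound_general n r m A hA B hframe hB
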